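/- arXiv:math/0503003 — 3 statements merged into one kernel-verified Lean document; each statement's English description precedes it below -/
import Mathlib

section
/- For every integer l > 1 and all linear functionals φ, λ ∈ M₄(l)*, one has λ(PD(φ)) = −φ(PD(λ)); that is, the bilinear form on M₄(l)* induced by PD is skew-symmetric. -/
open scoped BigOperators

namespace MW

variable (l : ℕ)

/-- Index type for the basis symbols: `0 ↦ x²`, `1 ↦ xy`, `2 ↦ y²`. -/
abbrev Sym := Fin 3 × ZMod l × ZMod l

/-- The free ℂ-vector space on the symbols. -/
abbrev V := Sym l →₀ ℂ

/-- `gcd(u,v,l) = 1`. -/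
def copr (u v : ZMod l) : Prop := Nat.gcd (Nat.gcd (ZMod.val u) (ZMod.val v)) l = 1

instance (u v : ZMod l) : Decidable (copr l u v) := by unfold copr; infer_instance

noncomputable def X2 (u v : ZMod l) : V l := Finsupp.single (0, u, v) 1
noncomputable def XY (u v : ZMod l) : V l := Finsupp.single (1, u, v) 1
noncomputable def Y2 (u v : ZMod l) : V l := Finsupp.single (2, u, v) 1

/-- The relation subspace: the relations of Merel–Shokurov on coprime symbols,
together with the (dummy) basis vectors at non-coprime indices. -/
noncomputable def Rel : Submodule ℂ (V l) :=
  Submodule.span ℂ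
    ({ w | ∃ u v, ¬ copr l u v ∧ (w = X2 l u v ∨ w = XY l u v ∨ w = Y2 l u v) } ∪
     { w | ∃ u v, copr l u v ∧
        (w = X2 l u v + Y2 l v (-u) ∨
         w = XY l u v - XY l v (-u) ∨
         w = Y2 l u v + X2 l v (-u) ∨
         w = XY l v (-u - v) - XY l (-u - v) u + Y2 l (-u - v) u + X2 l u v - XY l u v) })

/-- The space of weight four modular symbols of level `l`. -/
abbrev M := V l ⧸ Rel l

noncomputable def x2 (u v : ZMod l) : M l := Submodule.Quotient.mk (X2 l u v)
noncomputable def xy (u v : ZMod l) : M l := Submodule.Quotient.mk (XY l u v)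
noncomputable def y2 (u v : ZMod l) : M l := Submodule.Quotient.mk (Y2 l u v)

/-- The class of `p₂·x²(u,v) + p₁·xy(u,v) + p₀·y²(u,v)` in `M l`. -/
noncomputable def pcl (p2 p1 p0 : ℂ) (u v : ZMod l) : M l :=
  p2 • x2 l u v + p1 • xy l u v + p0 • y2 l u v

/-- The Poincaré duality map (as a function on the dual space). -/
noncomputable def PD [NeZero l] (φ : Module.Dual ℂ (M l)) : M l :=
  (24 : ℂ)⁻¹ • ∑ u : ZMod l, ∑ v : ZMod l,
    ( φ (pcl l 1 (-2) 1 (-v) (u + v) - pcl l 1 2 1 v (v - u)) • x2 l u v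
      - (2 : ℂ) • φ (pcl l 0 (-1) 1 (-v) (u + v) + pcl l 0 1 1 v (v - u)) • xy l u v
      + φ (pcl l 0 0 1 (-v) (u + v) - pcl l 0 0 1 v (v - u)) • y2 l u v )

end MW

/-!
Expand `λ (PD φ) + φ (PD λ)` into products of values of `φ` and `λ` on symbols, and
reindex the terms of `λ (PD φ)` along `σ : (u, v) ↦ (-v, u + v)` and `τ : (u, v) ↦ (v, v - u)`
so that `φ` is always evaluated at `(u, v)`. The summand at `(u, v)` is then `λ` applied to a
combination of symbols whose coefficients are linear in the values of `φ` at `(u, v)`, and that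
combination vanishes in `M l` by Manin's two- and three-term relations.
-/

namespace MW

variable {l : ℕ}

theorem copr_iff_isCoprime [NeZero l] {u v : ZMod l} : copr l u v ↔ IsCoprime u v := by
  rw [copr, ← Nat.Coprime, ← ZMod.isUnit_iff_coprime]
  constructor
  · rintro ⟨w, hw⟩
    have hg := congrArg (Int.cast : ℤ → ZMod l) (Nat.gcd_eq_gcd_ab u.val v.val)
    push_cast [ZMod.natCast_zmod_val] at hg
    refine ⟨↑w⁻¹ * (Nat.gcdA u.val v.val : ZMod l), ↑w⁻¹ * (Nat.gcdB u.val v.val : ZMod l),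
      ?_⟩
    rw [← Units.inv_mul w, hw, hg]
    ring
  · intro h
    refine h.isUnit_of_dvd' ?_ ?_
    · simpa using Nat.cast_dvd_cast (α := ZMod l) (Nat.gcd_dvd_left u.val v.val)
    · simpa using Nat.cast_dvd_cast (α := ZMod l) (Nat.gcd_dvd_right u.val v.val)

theorem copr_of_copr_mul_add_mul [NeZero l] {u v : ZMod l} (a b c d : ZMod l)
    (h : copr l (a * u + b * v) (c * u + d * v)) : copr l u v := by
  obtain ⟨s, t, hst⟩ := copr_iff_isCoprime.mp h
  exact copr_iff_isCoprime.mpr ⟨s * a + t * c, s * b + t * d, by linear_combination hst⟩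

variable (l)

theorem pcl_eq_zero_of_not_copr (a b c : ℂ) {u v : ZMod l} (h : ¬ copr l u v) :
    pcl l a b c u v = 0 := by
  have hX : x2 l u v = 0 := (Submodule.Quotient.mk_eq_zero _).2 <|
    Submodule.subset_span (Or.inl ⟨u, v, h, Or.inl rfl⟩)
  have hXY : xy l u v = 0 := (Submodule.Quotient.mk_eq_zero _).2 <|
    Submodule.subset_span (Or.inl ⟨u, v, h, Or.inr (Or.inl rfl)⟩)
  have hY : y2 l u v = 0 := (Submodule.Quotient.mk_eq_zero _).2 <|
    Submodule.subset_span (Or.inl ⟨u, v, h, Or.inr (Or.inr rfl)⟩)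
  simp [pcl, hX, hXY, hY]

section Relations

variable [NeZero l]

theorem pcl_two_term (a b c : ℂ) (u v : ZMod l) :
    pcl l a b c u v + pcl l c (-b) a v (-u) = 0 := by
  by_cases h : copr l u v
  · have hrel : ∀ w, (w = X2 l u v + Y2 l v (-u) ∨ w = XY l u v - XY l v (-u) ∨
        w = Y2 l u v + X2 l v (-u)) → (Submodule.Quotient.mk w : M l) = 0 := fun w hw =>
      (Submodule.Quotient.mk_eq_zero _).2 <| Submodule.subset_span <| Or.inr ⟨u, v, h, by tauto⟩
    have h₁ := hrel _ (Or.inl rfl)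
    have h₂ := hrel _ (Or.inr (Or.inl rfl))
    have h₃ := hrel _ (Or.inr (Or.inr rfl))
    simp only [Submodule.Quotient.mk_add, Submodule.Quotient.mk_sub] at h₁ h₂ h₃
    simp only [pcl, x2, xy, y2]
    linear_combination (norm := module) a • h₁ + b • h₂ + c • h₃
  · have h' : ¬ copr l v (-u) := fun h' =>
      h (copr_of_copr_mul_add_mul 0 1 (-1) 0 (by convert h' using 2 <;> ring))
    rw [pcl_eq_zero_of_not_copr l a b c h, pcl_eq_zero_of_not_copr l c (-b) a h', add_zero]

theorem three_term_x_sq_sub_xy (u v : ZMod l) :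
    pcl l 1 (-1) 0 u v + pcl l 0 1 0 v (-u - v) + pcl l 0 (-1) 1 (-u - v) u = 0 := by
  by_cases h : copr l u v
  · have hrel : (Submodule.Quotient.mk (XY l v (-u - v) - XY l (-u - v) u + Y2 l (-u - v) u
        + X2 l u v - XY l u v) : M l) = 0 :=
      (Submodule.Quotient.mk_eq_zero _).2 <| Submodule.subset_span <|
        Or.inr ⟨u, v, h, Or.inr (Or.inr (Or.inr rfl))⟩
    simp only [Submodule.Quotient.mk_add, Submodule.Quotient.mk_sub] at hrel
    simp only [pcl, x2, xy, y2]
    linear_combination (norm := module) hrel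
  · have hU : ¬ copr l v (-u - v) := fun h' =>
      h (copr_of_copr_mul_add_mul 0 1 (-1) (-1) (by convert h' using 2 <;> ring))
    have hU₂ : ¬ copr l (-u - v) u := fun h' =>
      h (copr_of_copr_mul_add_mul (-1) (-1) 1 0 (by convert h' using 2 <;> ring))
    simp [pcl_eq_zero_of_not_copr l _ _ _ h, pcl_eq_zero_of_not_copr l _ _ _ hU,
      pcl_eq_zero_of_not_copr l _ _ _ hU₂]

/-- Manin's three-term relation: the coefficients are those of `P`, `P ∘ U` and `P ∘ U²` for
`P = a x² + b xy + c y²` and `U (x, y) = (-y, x - y)`. -/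
theorem pcl_three_term (a b c : ℂ) (u v : ZMod l) :
    pcl l a b c u v + pcl l c (-b - 2 * c) (a + b + c) v (-u - v)
      + pcl l (a + b + c) (-2 * a - b) a (-u - v) u = 0 := by
  linear_combination (norm := skip)
    (a + b + c) • three_term_x_sq_sub_xy l (-u - v) u + a • three_term_x_sq_sub_xy l u v
      + c • three_term_x_sq_sub_xy l v (-u - v)
  simp only [pcl]
  ring_nf
  module

/- The coefficients below were found by solving the linear system formed by the two- and
three-term relations at the points `(a u + b v, c u + d v)` with `|a|, |b|, |c|, |d| ≤ 1`. -/
theorem pd_kernel_relation (a b c : ℂ) (u v : ZMod l) :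
    pcl l (a - 2 * b + c) (2 * b - 2 * c) c (u + v) (-u)
      - pcl l (a + 2 * b + c) (2 * b + 2 * c) c (u - v) u
      + pcl l a (2 * b - 2 * a) (a - 2 * b + c) (-v) (u + v)
      - pcl l a (2 * a + 2 * b) (a + 2 * b + c) v (v - u) = 0 := by
  linear_combination (norm := skip)
    pcl_two_term l (-c) (2 * b + 2 * c) (-a - 2 * b - c) (-u) (u - v)
      + pcl_two_term l (a + 2 * b + c) (-2 * a - 2 * b) a (v - u) (-v)
      + pcl_two_term l (-a) (-2 * a - 2 * b) (-a - 2 * b - c) (-v) (u - v)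
      + pcl_two_term l (-a) (-2 * b) (-c) v (-u)
      + pcl_two_term l (-a) (-2 * a - 2 * b) (-a - 2 * b - c) v (v - u)
      + pcl_three_term l c (-2 * b - 2 * c) (a + 2 * b + c) (-u) (u - v)
      + pcl_three_term l (a - 2 * b + c) (2 * b - 2 * c) c (u + v) (-u)
  simp only [pcl]
  ring_nf
  module

end Relations

def sigma : ZMod l × ZMod l ≃ ZMod l × ZMod l where
  toFun p := (-p.2, p.1 + p.2)
  invFun p := (p.1 + p.2, -p.1)
  left_inv p := by ext <;> simp
  right_inv p := by ext <;> simp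

def tau : ZMod l × ZMod l ≃ ZMod l × ZMod l where
  toFun p := (p.2, p.2 - p.1)
  invFun p := (p.1 - p.2, p.1)
  left_inv p := by ext <;> simp
  right_inv p := by ext <;> simp

variable {l}

noncomputable def kerSigma (φ ψ : Module.Dual ℂ (M l)) (r p : ZMod l × ZMod l) : ℂ :=
  φ (pcl l 1 (-2) 1 r.1 r.2) * ψ (x2 l p.1 p.2)
    - 2 * φ (pcl l 0 (-1) 1 r.1 r.2) * ψ (xy l p.1 p.2) + φ (pcl l 0 0 1 r.1 r.2) * ψ (y2 l p.1 p.2)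

noncomputable def kerTau (φ ψ : Module.Dual ℂ (M l)) (r p : ZMod l × ZMod l) : ℂ :=
  φ (pcl l 1 2 1 r.1 r.2) * ψ (x2 l p.1 p.2)
    + 2 * φ (pcl l 0 1 1 r.1 r.2) * ψ (xy l p.1 p.2) + φ (pcl l 0 0 1 r.1 r.2) * ψ (y2 l p.1 p.2)

variable [NeZero l]

theorem apply_PD (φ ψ : Module.Dual ℂ (M l)) :
    ψ (PD l φ) = 24⁻¹ * ∑ p, (kerSigma φ ψ (sigma l p) p - kerTau φ ψ (tau l p) p) := by
  simp only [PD, map_smul, smul_eq_mul, map_sum]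
  rw [← Fintype.sum_prod_type']
  congr 1
  refine Finset.sum_congr rfl fun p _ => ?_
  simp only [kerSigma, kerTau, sigma, tau, Equiv.coe_fn_mk, pcl, map_add, map_sub, map_smul,
    smul_eq_mul]
  ring

theorem kerSigma_sub_kerTau_add_swap_eq_zero (φ ψ : Module.Dual ℂ (M l))
    (q : ZMod l × ZMod l) :
    kerSigma φ ψ q ((sigma l).symm q) - kerTau φ ψ q ((tau l).symm q)
      + (kerSigma ψ φ (sigma l q) q - kerTau ψ φ (tau l q) q) = 0 := by
  have h := congrArg ψ (pd_kernel_relation l (φ (x2 l q.1 q.2)) (φ (xy l q.1 q.2))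
    (φ (y2 l q.1 q.2)) q.1 q.2)
  simp only [kerSigma, kerTau, sigma, tau, Equiv.coe_fn_mk, Equiv.coe_fn_symm_mk, pcl, map_add,
    map_sub, map_smul, smul_eq_mul, map_zero] at h ⊢
  linear_combination h

end MW

theorem stmt4_general (l : ℕ) [NeZero l] (φ lam : Module.Dual ℂ (MW.M l)) :
    lam (MW.PD l φ) = - φ (MW.PD l lam) := by
  have hσ : ∑ p, MW.kerSigma φ lam (MW.sigma l p) p
      = ∑ q, MW.kerSigma φ lam q ((MW.sigma l).symm q) :=
    Fintype.sum_equiv (MW.sigma l) _ _ fun p => by simp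
  have hτ : ∑ p, MW.kerTau φ lam (MW.tau l p) p = ∑ q, MW.kerTau φ lam q ((MW.tau l).symm q) :=
    Fintype.sum_equiv (MW.tau l) _ _ fun p => by simp
  rw [eq_neg_iff_add_eq_zero, MW.apply_PD, MW.apply_PD, ← mul_add, Finset.sum_sub_distrib, hσ,
    hτ, ← Finset.sum_sub_distrib, ← Finset.sum_add_distrib,
    Finset.sum_eq_zero fun q _ => MW.kerSigma_sub_kerTau_add_swap_eq_zero φ lam q, mul_zero]

theorem stmt4 (l : ℕ) (hl : 1 < l) [NeZero l] (φ lam : Module.Dual ℂ (MW.M l)) :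
    lam (MW.PD l φ) = - φ (MW.PD l lam) :=
  stmt4_general l φ lam
end

section
/- For every integer l > 1 and every linear functional φ ∈ M₄(l)*: (i) PD(φ) lies in the cuspidal subspace S₄(l); (ii) if φ vanishes identically on S₄(l), then PD(φ) = 0. Consequently PD induces a well-defined linear map S₄(l)* → S₄(l). -/
open scoped BigOperators

namespace MW

variable (l : ℕ)

/-- Reduction `ZMod l → ZMod (gcd(a,l))`. -/
noncomputable def castg (a : ZMod l) : ZMod l →+* ZMod (Nat.gcd (ZMod.val a) l) :=
  ZMod.castHom (Nat.gcd_dvd_right (ZMod.val a) l) (ZMod (Nat.gcd (ZMod.val a) l))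

/-- The functional on `V l` attached to the cusp data `(a, b)`. -/
noncomputable def psiV (a : ZMod l) (b : ZMod (Nat.gcd (ZMod.val a) l)) : V l →ₗ[ℂ] ℂ :=
  Finsupp.lift ℂ ℂ (Sym l) fun p =>
    if copr l p.2.1 p.2.2 then
      (if p.1 = 0 then
        ((if p.2.1 = a ∧ castg l a p.2.2 = b then (1 : ℂ) else 0) +
         (if p.2.1 = -a ∧ castg l a p.2.2 = -b then (1 : ℂ) else 0))
       else if p.1 = 2 then
        (-(if p.2.2 = a ∧ castg l a p.2.1 = -b then (1 : ℂ) else 0) -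
          (if p.2.2 = -a ∧ castg l a p.2.1 = b then (1 : ℂ) else 0))
       else 0)
    else 0

/-- The cuspidal subspace `S₄(l) ⊆ M₄(l)`: the (image in `M l` of the) intersection
of the kernels of all the functionals `ψ_{(a,b)}`. -/
noncomputable def S : Submodule ℂ (M l) :=
  Submodule.map (Rel l).mkQ
    (⨅ (a : ZMod l), ⨅ (b : ZMod (Nat.gcd (ZMod.val a) l)), ⨅ (_ : IsUnit b),
      LinearMap.ker (psiV l a b))

end MW

namespace MW
variable {l : ℕ}

lemma copr_iff [NeZero l] (u v : ZMod l) : copr l u v ↔ ∃ x y : ZMod l, x * u + y * v = 1 := by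
  constructor
  · intro h
    set g1 := Nat.gcd (ZMod.val u) (ZMod.val v) with hg1
    have b1 : (g1 : ℤ) = (ZMod.val u) * Nat.gcdA (ZMod.val u) (ZMod.val v)
        + (ZMod.val v) * Nat.gcdB (ZMod.val u) (ZMod.val v) := Nat.gcd_eq_gcd_ab _ _
    have b2 : ((1:ℕ) : ℤ) = (g1 : ℤ) * Nat.gcdA g1 l + (l:ℤ) * Nat.gcdB g1 l := by
      rw [← h]; exact Nat.gcd_eq_gcd_ab _ _
    refine ⟨((Nat.gcdA (ZMod.val u) (ZMod.val v) * Nat.gcdA g1 l : ℤ) : ZMod l),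
            ((Nat.gcdB (ZMod.val u) (ZMod.val v) * Nat.gcdA g1 l : ℤ) : ZMod l), ?_⟩
    have key : ((ZMod.val u : ℤ) * (Nat.gcdA (ZMod.val u) (ZMod.val v) * Nat.gcdA g1 l)
        + (ZMod.val v : ℤ) * (Nat.gcdB (ZMod.val u) (ZMod.val v) * Nat.gcdA g1 l)
        + (l:ℤ) * Nat.gcdB g1 l : ℤ) = 1 := by
      have : ((ZMod.val u : ℤ) * (Nat.gcdA (ZMod.val u) (ZMod.val v) * Nat.gcdA g1 l)
        + (ZMod.val v : ℤ) * (Nat.gcdB (ZMod.val u) (ZMod.val v) * Nat.gcdA g1 l) : ℤ)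
        = ((ZMod.val u) * Nat.gcdA (ZMod.val u) (ZMod.val v)
        + (ZMod.val v) * Nat.gcdB (ZMod.val u) (ZMod.val v)) * Nat.gcdA g1 l := by ring
      rw [this, ← b1]; omega
    have := congrArg (fun z : ℤ => (z : ZMod l)) key
    push_cast at this
    simp only [ZMod.natCast_val, ZMod.cast_id, ZMod.natCast_self, zero_mul, add_zero] at this
    push_cast
    linear_combination this
  · rintro ⟨x, y, hxy⟩
    set d := Nat.gcd (Nat.gcd (ZMod.val u) (ZMod.val v)) l with hd
    have hdu : d ∣ ZMod.val u := dvd_trans (Nat.gcd_dvd_left _ _) (Nat.gcd_dvd_left _ _)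
    have hdv : d ∣ ZMod.val v := dvd_trans (Nat.gcd_dvd_left _ _) (Nat.gcd_dvd_right _ _)
    have hdl : d ∣ l := Nat.gcd_dvd_right _ _
    have hn : ((ZMod.val x * ZMod.val u + ZMod.val y * ZMod.val v : ℕ) : ZMod l) = ((1:ℕ) : ZMod l) := by
      push_cast
      simp only [ZMod.natCast_val, ZMod.cast_id]
      rw [hxy]
    have hmod := (ZMod.natCast_eq_natCast_iff _ _ _).1 hn
    have hdvd : (l:ℤ) ∣ ((1:ℕ) - (ZMod.val x * ZMod.val u + ZMod.val y * ZMod.val v : ℕ) : ℤ) :=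
      (Nat.modEq_iff_dvd).1 hmod
    have h1 : (d:ℤ) ∣ 1 := by
      have h2 : (d:ℤ) ∣ ((ZMod.val x * ZMod.val u + ZMod.val y * ZMod.val v : ℕ) : ℤ) := by
        push_cast
        exact dvd_add (Dvd.dvd.mul_left (Int.natCast_dvd_natCast.2 hdu) _)
          (Dvd.dvd.mul_left (Int.natCast_dvd_natCast.2 hdv) _)
      have h3 : (d:ℤ) ∣ (l:ℤ) := Int.natCast_dvd_natCast.2 hdl
      have := dvd_add (h3.trans hdvd) h2
      simpa using this
    exact Nat.dvd_one.mp (by exact_mod_cast h1)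



section coprlemmas
variable [NeZero l] (u v : ZMod l)

lemma copr_rot : copr l v (-u) ↔ copr l u v := by
  rw [copr_iff, copr_iff]
  exact ⟨fun ⟨x,y,h⟩ => ⟨-y, x, by linear_combination h⟩,
         fun ⟨x,y,h⟩ => ⟨y, -x, by linear_combination h⟩⟩

lemma copr_neg : copr l (-u) (-v) ↔ copr l u v := by
  rw [copr_iff, copr_iff]
  exact ⟨fun ⟨x,y,h⟩ => ⟨-x, -y, by linear_combination h⟩,
         fun ⟨x,y,h⟩ => ⟨-x, -y, by linear_combination h⟩⟩

lemma copr_tau1 : copr l v (-u-v) ↔ copr l u v := by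
  rw [copr_iff, copr_iff]
  exact ⟨fun ⟨x,y,h⟩ => ⟨-y, x - y, by linear_combination h⟩,
         fun ⟨x,y,h⟩ => ⟨y - x, -x, by linear_combination h⟩⟩

lemma copr_tau2 : copr l (-u-v) u ↔ copr l u v := by
  rw [copr_iff, copr_iff]
  exact ⟨fun ⟨x,y,h⟩ => ⟨y - x, -x, by linear_combination h⟩,
         fun ⟨x,y,h⟩ => ⟨-y, x - y, by linear_combination h⟩⟩

lemma copr_c1 : copr l (-v) (u+v) ↔ copr l u v := by
  rw [copr_iff, copr_iff]
  exact ⟨fun ⟨x,y,h⟩ => ⟨y, y - x, by linear_combination h⟩,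
         fun ⟨x,y,h⟩ => ⟨x - y, x, by linear_combination h⟩⟩

lemma copr_c2 : copr l v (v-u) ↔ copr l u v := by
  rw [copr_iff, copr_iff]
  exact ⟨fun ⟨x,y,h⟩ => ⟨-y, x + y, by linear_combination h⟩,
         fun ⟨x,y,h⟩ => ⟨x + y, -x, by linear_combination h⟩⟩

end coprlemmas

section rels
variable {u v : ZMod l}

lemma x2_zero (h : ¬ copr l u v) : x2 l u v = 0 :=
  (Submodule.Quotient.mk_eq_zero _).2 (Submodule.subset_span (Or.inl ⟨u, v, h, Or.inl rfl⟩))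
lemma xy_zero (h : ¬ copr l u v) : xy l u v = 0 :=
  (Submodule.Quotient.mk_eq_zero _).2 (Submodule.subset_span (Or.inl ⟨u, v, h, Or.inr (Or.inl rfl)⟩))
lemma y2_zero (h : ¬ copr l u v) : y2 l u v = 0 :=
  (Submodule.Quotient.mk_eq_zero _).2 (Submodule.subset_span (Or.inl ⟨u, v, h, Or.inr (Or.inr rfl)⟩))

variable [NeZero l]

lemma r1 (u v : ZMod l) : x2 l u v = - y2 l v (-u) := by
  by_cases h : copr l u v
  · have hm : (Submodule.Quotient.mk (X2 l u v + Y2 l v (-u)) : M l) = 0 :=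
      (Submodule.Quotient.mk_eq_zero _).2
        (Submodule.subset_span (Or.inr ⟨u, v, h, Or.inl rfl⟩))
    rw [Submodule.Quotient.mk_add] at hm
    exact eq_neg_of_add_eq_zero_left hm
  · rw [x2_zero h, y2_zero (fun hc => h ((copr_rot u v).1 hc)), neg_zero]

lemma r2 (u v : ZMod l) : xy l u v = xy l v (-u) := by
  by_cases h : copr l u v
  · have hm : (Submodule.Quotient.mk (XY l u v - XY l v (-u)) : M l) = 0 :=
      (Submodule.Quotient.mk_eq_zero _).2
        (Submodule.subset_span (Or.inr ⟨u, v, h, Or.inr (Or.inl rfl)⟩))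
    rw [Submodule.Quotient.mk_sub] at hm
    exact sub_eq_zero.1 hm
  · rw [xy_zero h, xy_zero (fun hc => h ((copr_rot u v).1 hc))]

lemma r3 (u v : ZMod l) : y2 l u v = - x2 l v (-u) := by
  by_cases h : copr l u v
  · have hm : (Submodule.Quotient.mk (Y2 l u v + X2 l v (-u)) : M l) = 0 :=
      (Submodule.Quotient.mk_eq_zero _).2
        (Submodule.subset_span (Or.inr ⟨u, v, h, Or.inr (Or.inr (Or.inl rfl))⟩))
    rw [Submodule.Quotient.mk_add] at hm
    exact eq_neg_of_add_eq_zero_left hm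
  · rw [y2_zero h, x2_zero (fun hc => h ((copr_rot u v).1 hc)), neg_zero]

lemma rtau (u v : ZMod l) :
    xy l v (-u-v) - xy l (-u-v) u + y2 l (-u-v) u + x2 l u v - xy l u v = 0 := by
  by_cases h : copr l u v
  · have hm : (Submodule.Quotient.mk
        (XY l v (-u-v) - XY l (-u-v) u + Y2 l (-u-v) u + X2 l u v - XY l u v) : M l) = 0 :=
      (Submodule.Quotient.mk_eq_zero _).2
        (Submodule.subset_span (Or.inr ⟨u, v, h, Or.inr (Or.inr (Or.inr rfl))⟩))
    rw [Submodule.Quotient.mk_sub, Submodule.Quotient.mk_add, Submodule.Quotient.mk_add,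
      Submodule.Quotient.mk_sub] at hm
    exact hm
  · rw [x2_zero h, xy_zero h, xy_zero (fun hc => h ((copr_tau1 u v).1 hc)),
      xy_zero (fun hc => h ((copr_tau2 u v).1 hc)),
      y2_zero (fun hc => h ((copr_tau2 u v).1 hc))]
    abel

lemma x2_negneg (u v : ZMod l) : x2 l (-u) (-v) = x2 l u v := by
  rw [r1 (-u) (-v), neg_neg, r3 (-v) u, neg_neg, neg_neg]
lemma xy_negneg (u v : ZMod l) : xy l (-u) (-v) = xy l u v := by
  rw [r2 (-u) (-v), neg_neg, r2 (-v) u, neg_neg]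
lemma y2_negneg (u v : ZMod l) : y2 l (-u) (-v) = y2 l u v := by
  rw [r3 (-u) (-v), neg_neg, r1 (-v) u, neg_neg, neg_neg]

end rels

section derived
variable [NeZero l]

lemma E2 (p q : ZMod l) : x2 l p (p+q) =
    x2 l p q - xy l p q + xy l (p+q) q - xy l p (p+q) := by
  have h := rtau p q
  rw [show (-p-q : ZMod l) = -(p+q) by ring] at h
  have h1 : xy l q (-(p+q)) = xy l (p+q) q := by
    rw [r2 q (-(p+q))]; exact xy_negneg (p+q) q
  have h2 : xy l (-(p+q)) p = xy l p (p+q) := by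
    rw [r2 (-(p+q)) p, neg_neg]
  have h3 : y2 l (-(p+q)) p = - x2 l p (p+q) := by
    rw [r3 (-(p+q)) p, neg_neg]
  rw [h1, h2, h3] at h
  apply eq_of_sub_eq_zero
  calc x2 l p (p+q) - (x2 l p q - xy l p q + xy l (p+q) q - xy l p (p+q))
      = -(xy l (p+q) q - xy l p (p+q) + -x2 l p (p+q) + x2 l p q - xy l p q) := by abel
    _ = 0 := by rw [h, neg_zero]

lemma E1 (p q : ZMod l) : y2 l p q =
    -xy l p q + xy l p (q-p) - xy l (p-q) q + y2 l (p-q) q := by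
  have h := E2 q (-p)
  rw [show (q + -p : ZMod l) = q - p by ring] at h
  -- h : x2 q (q-p) = x2 q (-p) - xy q (-p) + xy (q-p) (-p) - xy q (q-p)
  have e0 : y2 l p q = - x2 l q (-p) := r3 p q
  have c1 : xy l q (-p) = xy l p q := (r2 p q).symm
  have c2 : xy l (q-p) (-p) = xy l p (q-p) := (r2 p (q-p)).symm
  have c3 : xy l q (q-p) = xy l (p-q) q := by
    rw [r2 (p-q) q, show (-(p-q) : ZMod l) = q - p by ring]
  have c4 : x2 l q (q-p) = - y2 l (p-q) q := by
    rw [r1 q (q-p), show (-q : ZMod l) = -q by ring]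
    rw [show (q - p : ZMod l) = -(p-q) by ring, y2_negneg]
  rw [c1, c2, c3, c4] at h
  have h' : y2 l (p-q) q = -(x2 l q (-p) - xy l p q + xy l p (q-p) - xy l (p-q) q) := by
    rw [← h, neg_neg]
  rw [e0, h']
  abel

lemma key_T (a v : ZMod l) : pcl l 1 2 1 v (v-a) =
    x2 l v (-a) + xy l (v-a) (-a) + y2 l a (v-a) - xy l a (v-a) := by
  have h1 := E2 v (-a)
  rw [show (v + -a : ZMod l) = v - a by ring] at h1
  have h2 := E1 v (v-a)
  rw [show (v-a-v : ZMod l) = -a by ring, show (v-(v-a) : ZMod l) = a by ring] at h2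
  rw [pcl, h1, h2]
  module

lemma L1 (p q : ZMod l) : pcl l 1 (-2) 1 (-q) p = - pcl l 1 2 1 p q := by
  have c1 : x2 l (-q) p = - y2 l p q := by rw [r1 (-q) p, neg_neg]
  have c2 : xy l (-q) p = xy l p q := by rw [r2 (-q) p, neg_neg]
  have c3 : y2 l (-q) p = - x2 l p q := by rw [r3 (-q) p, neg_neg]
  rw [pcl, pcl, c1, c2, c3]
  module

lemma pcl_negneg (c2 c1 c0 : ℂ) (p q : ZMod l) :
    pcl l c2 c1 c0 (-p) (-q) = pcl l c2 c1 c0 p q := by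
  rw [pcl, pcl, x2_negneg, xy_negneg, y2_negneg]

end derived

section castglemmas
variable [NeZero l]

instance gcdNeZero (a : ZMod l) : NeZero (Nat.gcd (ZMod.val a) l) :=
  ⟨(Nat.gcd_pos_of_pos_right _ (Nat.pos_of_ne_zero (NeZero.ne l))).ne'⟩

lemma castg_self (a : ZMod l) : castg l a a = 0 := by
  rw [castg, ZMod.castHom_apply]
  have : (ZMod.cast a : ZMod (Nat.gcd (ZMod.val a) l)) = ((ZMod.val a : ℕ) : ZMod (Nat.gcd (ZMod.val a) l)) := by
    rw [ZMod.natCast_val]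
  rw [this, ZMod.natCast_eq_zero_iff]
  exact Nat.gcd_dvd_left _ _

/-- the coset finset -/
noncomputable def F (a : ZMod l) (b : ZMod (Nat.gcd (ZMod.val a) l)) : Finset (ZMod l) :=
  Finset.filter (fun v => castg l a v = b) Finset.univ

lemma mem_F {a : ZMod l} {b : ZMod (Nat.gcd (ZMod.val a) l)} {v : ZMod l} :
    v ∈ F a b ↔ castg l a v = b := by
  simp [F]

lemma sum_shift {A : Type*} [AddCommMonoid A] (a : ZMod l) (b : ZMod (Nat.gcd (ZMod.val a) l))
    (c : ZMod l) (hc : castg l a c = 0) (f : ZMod l → A) :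
    ∑ v ∈ F a b, f (v + c) = ∑ v ∈ F a b, f v := by
  apply Finset.sum_nbij' (i := fun v => v + c) (j := fun v => v - c)
  · intro v hv; rw [mem_F] at hv ⊢; rw [map_add, hv, hc, add_zero]
  · intro v hv; rw [mem_F] at hv ⊢; rw [map_sub, hv, hc, sub_zero]
  · intro v _; ring
  · intro v _; ring
  · intro v _; rfl

lemma sum_negidx {A : Type*} [AddCommMonoid A] (a : ZMod l) (b : ZMod (Nat.gcd (ZMod.val a) l))
    (f : ZMod l → A) :
    ∑ v ∈ F a b, f (-v) = ∑ v ∈ F a (-b), f v := by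
  apply Finset.sum_nbij' (i := fun v => -v) (j := fun v => -v)
  · intro v hv; rw [mem_F] at hv ⊢; rw [map_neg, hv]
  · intro v hv; rw [mem_F] at hv ⊢; rw [map_neg, hv, neg_neg]
  · intro v _; ring
  · intro v _; ring
  · intro v _; rfl

lemma key (a : ZMod l) (b : ZMod (Nat.gcd (ZMod.val a) l)) :
    ∑ v ∈ F a b, pcl l 1 2 1 v (v - a) = 0 := by
  have step1 : ∑ v ∈ F a b, pcl l 1 2 1 v (v - a)
      = ∑ v ∈ F a b, (x2 l v (-a) + xy l (v-a) (-a) + y2 l a (v-a) - xy l a (v-a)) :=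
    Finset.sum_congr rfl (fun v _ => key_T a v)
  have hma : castg l a (-a) = 0 := by rw [map_neg, castg_self, neg_zero]
  have e2 : ∑ v ∈ F a b, xy l (v-a) (-a) = ∑ v ∈ F a b, xy l v (-a) := by
    have := sum_shift a b (-a) hma (fun w => xy l w (-a))
    simpa [sub_eq_add_neg] using this
  have e3 : ∑ v ∈ F a b, y2 l a (v-a) = ∑ v ∈ F a b, y2 l a v := by
    have := sum_shift a b (-a) hma (fun w => y2 l a w)
    simpa [sub_eq_add_neg] using this
  have e4 : ∑ v ∈ F a b, xy l a (v-a) = ∑ v ∈ F a b, xy l a v := by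
    have := sum_shift a b (-a) hma (fun w => xy l a w)
    simpa [sub_eq_add_neg] using this
  have p1 : ∀ v : ZMod l, x2 l v (-a) = - y2 l a v := by
    intro v
    rw [r1 v (-a), show (-v : ZMod l) = -v by ring]
    rw [show ((-a : ZMod l)) = -a by ring]
    rw [show (y2 l (-a) (-v)) = y2 l a v from y2_negneg a v]
  have p2 : ∀ v : ZMod l, xy l v (-a) = xy l a v := by
    intro v
    rw [r2 v (-a), show (xy l (-a) (-v)) = xy l a v from xy_negneg a v]
  rw [step1]
  rw [Finset.sum_sub_distrib, Finset.sum_add_distrib, Finset.sum_add_distrib, e2, e3, e4]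
  rw [Finset.sum_congr rfl (fun v _ => p1 v), Finset.sum_congr rfl (fun v _ => p2 v)]
  rw [Finset.sum_neg_distrib]
  abel

lemma key' (a : ZMod l) (b : ZMod (Nat.gcd (ZMod.val a) l)) :
    ∑ v ∈ F a b, pcl l 1 2 1 v (v + a) = 0 := by
  have h := sum_negidx a b (fun v => pcl l 1 2 1 (-v) (-v + a))
  have e : ∀ v : ZMod l, pcl l 1 2 1 (-v) (-v+a) = pcl l 1 2 1 v (v-a) := by
    intro v
    rw [show (-v + a : ZMod l) = -(v - a) by ring, pcl_negneg]
  calc ∑ v ∈ F a b, pcl l 1 2 1 v (v + a)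
      = ∑ v ∈ F a b, (fun w => pcl l 1 2 1 (-w) (-w + a)) (-v) :=
        Finset.sum_congr rfl (fun v _ => by simp only [neg_neg])
    _ = ∑ v ∈ F a (-b), pcl l 1 2 1 (-v) (-v + a) := by exact sum_negidx a b (fun w => pcl l 1 2 1 (-w) (-w + a))
    _ = ∑ v ∈ F a (-b), pcl l 1 2 1 v (v - a) := Finset.sum_congr rfl (fun v _ => e v)
    _ = 0 := key a (-b)

end castglemmas




noncomputable def cx (a : ZMod l) (b : ZMod (Nat.gcd (ZMod.val a) l)) (p q : ZMod l) : ℂ :=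
  if copr l p q then ((if p = a ∧ castg l a q = b then (1:ℂ) else 0) +
    (if p = -a ∧ castg l a q = -b then (1:ℂ) else 0)) else 0
noncomputable def cy (a : ZMod l) (b : ZMod (Nat.gcd (ZMod.val a) l)) (p q : ZMod l) : ℂ :=
  if copr l p q then (-(if q = a ∧ castg l a p = -b then (1:ℂ) else 0) -
    (if q = -a ∧ castg l a p = b then (1:ℂ) else 0)) else 0

lemma psiV_X2 (a : ZMod l) (b : ZMod (Nat.gcd (ZMod.val a) l)) (u v : ZMod l) :
    psiV l a b (X2 l u v) = cx a b u v := by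
  rw [psiV, X2, cx]
  simp [Finsupp.lift_apply, Finsupp.sum_single_index]

lemma psiV_XY (a : ZMod l) (b : ZMod (Nat.gcd (ZMod.val a) l)) (u v : ZMod l) :
    psiV l a b (XY l u v) = 0 := by
  rw [psiV, XY]
  simp [Finsupp.lift_apply, Finsupp.sum_single_index]

lemma psiV_Y2 (a : ZMod l) (b : ZMod (Nat.gcd (ZMod.val a) l)) (u v : ZMod l) :
    psiV l a b (Y2 l u v) = cy a b u v := by
  rw [psiV, Y2, cy]
  simp [Finsupp.lift_apply, Finsupp.sum_single_index]

lemma cx_of_copr {p q : ZMod l} (a : ZMod l) (b : ZMod (Nat.gcd (ZMod.val a) l))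
    (h : copr l p q) : cx a b p q = (if p = a ∧ castg l a q = b then (1:ℂ) else 0) +
    (if p = -a ∧ castg l a q = -b then (1:ℂ) else 0) := if_pos h
lemma cy_of_copr {p q : ZMod l} (a : ZMod l) (b : ZMod (Nat.gcd (ZMod.val a) l))
    (h : copr l p q) : cy a b p q = -(if q = a ∧ castg l a p = -b then (1:ℂ) else 0) -
    (if q = -a ∧ castg l a p = b then (1:ℂ) else 0) := if_pos h



section helpers
variable {A : Type*} [AddCommMonoid A]

lemma sum_collapse [NeZero l] (c : ZMod l) (Q : ZMod l → Prop) [DecidablePred Q]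
    (f : ZMod l → A) :
    ∑ x : ZMod l, (if x = c ∧ Q x then f x else 0) = if Q c then f c else 0 := by
  have h : ∀ x : ZMod l, (if x = c ∧ Q x then f x else 0)
      = if x = c then (if Q x then f x else 0) else 0 := by
    intro x; by_cases h1 : x = c <;> by_cases h2 : Q x <;> simp [h1, h2]
  rw [Finset.sum_congr rfl (fun x _ => h x), Finset.sum_ite_eq' Finset.univ c
    (fun x => if Q x then f x else 0), if_pos (Finset.mem_univ c)]

lemma sum_filter' [NeZero l] (Q : ZMod l → Prop) [DecidablePred Q] (f : ZMod l → A) :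
    ∑ x : ZMod l, (if Q x then f x else 0) = ∑ x ∈ Finset.filter Q Finset.univ, f x :=
  (Finset.sum_filter Q f).symm

lemma ite_one_smul {R : Type*} [Semiring R] [Module R A] (P : Prop) [Decidable P] (m : A) :
    (if P then m else 0) = (if P then (1:R) else 0) • m := by
  split <;> simp

end helpers

section conds
variable [NeZero l]

lemma cond_add (u v a : ZMod l) : (u + v = a) ↔ (u = a - v) :=
  ⟨fun h => by linear_combination h, fun h => by linear_combination h⟩
lemma cond_sub (u v a : ZMod l) : (v - u = a) ↔ (u = v - a) :=
  ⟨fun h => by linear_combination -h, fun h => by linear_combination -h⟩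
lemma cond_addneg (u v a : ZMod l) : (u + v = -a) ↔ (u = -a - v) :=
  ⟨fun h => by linear_combination h, fun h => by linear_combination h⟩
lemma cond_subneg (u v a : ZMod l) : (v - u = -a) ↔ (u = v + a) :=
  ⟨fun h => by linear_combination -h, fun h => by linear_combination -h⟩

lemma castg_nsub (a u : ZMod l) : castg l a (u + -a) = castg l a u := by
  rw [map_add, map_neg, castg_self, neg_zero, add_zero]
lemma castg_addr (a u : ZMod l) : castg l a (u + a) = castg l a u := by
  rw [map_add, castg_self, add_zero]
lemma castg_subl (a u : ZMod l) : castg l a (a - u) = - castg l a u := by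
  rw [map_sub, castg_self, zero_sub]
lemma castg_nsubl (a u : ZMod l) : castg l a (-a - u) = - castg l a u := by
  rw [map_sub, map_neg, castg_self, neg_zero, zero_sub]
lemma castg_subr (a u : ZMod l) : castg l a (u - a) = castg l a u := by
  rw [map_sub, castg_self, sub_zero]

end conds

section reps
variable (l) in
noncomputable def PCL (p2 p1 p0 : ℂ) (u v : ZMod l) : V l :=
  p2 • X2 l u v + p1 • XY l u v + p0 • Y2 l u v

variable (l) in
noncomputable def AR (u v : ZMod l) : V l := PCL l 1 (-2) 1 (-v) (u+v) - PCL l 1 2 1 v (v-u)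
variable (l) in
noncomputable def BR (u v : ZMod l) : V l := PCL l 0 (-1) 1 (-v) (u+v) + PCL l 0 1 1 v (v-u)
variable (l) in
noncomputable def CR (u v : ZMod l) : V l := PCL l 0 0 1 (-v) (u+v) - PCL l 0 0 1 v (v-u)

lemma mkQ_X2 (u v : ZMod l) : (Rel l).mkQ (X2 l u v) = x2 l u v := rfl
lemma mkQ_XY (u v : ZMod l) : (Rel l).mkQ (XY l u v) = xy l u v := rfl
lemma mkQ_Y2 (u v : ZMod l) : (Rel l).mkQ (Y2 l u v) = y2 l u v := rfl

lemma mkQ_PCL (p2 p1 p0 : ℂ) (u v : ZMod l) :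
    (Rel l).mkQ (PCL l p2 p1 p0 u v) = pcl l p2 p1 p0 u v := by
  rw [PCL, pcl, map_add, map_add, map_smul, map_smul, map_smul, mkQ_X2, mkQ_XY, mkQ_Y2]

lemma mkQ_AR (u v : ZMod l) :
    (Rel l).mkQ (AR l u v) = pcl l 1 (-2) 1 (-v) (u+v) - pcl l 1 2 1 v (v-u) := by
  rw [AR, map_sub, mkQ_PCL, mkQ_PCL]
lemma mkQ_BR (u v : ZMod l) :
    (Rel l).mkQ (BR l u v) = pcl l 0 (-1) 1 (-v) (u+v) + pcl l 0 1 1 v (v-u) := by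
  rw [BR, map_add, mkQ_PCL, mkQ_PCL]
lemma mkQ_CR (u v : ZMod l) :
    (Rel l).mkQ (CR l u v) = pcl l 0 0 1 (-v) (u+v) - pcl l 0 0 1 v (v-u) := by
  rw [CR, map_sub, mkQ_PCL, mkQ_PCL]

lemma pcl_zero [NeZero l] (p2 p1 p0 : ℂ) {u v : ZMod l} (h : ¬ copr l u v) :
    pcl l p2 p1 p0 u v = 0 := by
  rw [pcl, x2_zero h, xy_zero h, y2_zero h]; simp

lemma pcl001 [NeZero l] (u v : ZMod l) : pcl l 0 0 1 u v = y2 l u v := by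
  rw [pcl]; simp

end reps

section Ks
variable [NeZero l]

lemma K1 (a : ZMod l) (b : ZMod (Nat.gcd (ZMod.val a) l)) :
    ∑ v ∈ F a b, pcl l 1 2 1 (v + a) v = 0 := by
  have h := sum_shift a b a (castg_self a) (fun w => pcl l 1 2 1 w (w - a))
  calc ∑ v ∈ F a b, pcl l 1 2 1 (v + a) v
      = ∑ v ∈ F a b, pcl l 1 2 1 (v + a) (v + a - a) :=
        Finset.sum_congr rfl (fun v _ => by rw [show (v + a - a : ZMod l) = v by ring])
    _ = ∑ v ∈ F a b, pcl l 1 2 1 v (v - a) := h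
    _ = 0 := key a b

lemma K2 (a : ZMod l) (b : ZMod (Nat.gcd (ZMod.val a) l)) :
    ∑ v ∈ F a b, pcl l 1 2 1 (v - a) v = 0 := by
  have h := sum_shift a b (-a) (by rw [map_neg, castg_self, neg_zero]) (fun w => pcl l 1 2 1 w (w + a))
  calc ∑ v ∈ F a b, pcl l 1 2 1 (v - a) v
      = ∑ v ∈ F a b, pcl l 1 2 1 (v + -a) (v + -a + a) :=
        Finset.sum_congr rfl (fun v _ => by
          rw [show (v + -a + a : ZMod l) = v by ring, show (v + -a : ZMod l) = v - a by ring])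
    _ = ∑ v ∈ F a b, pcl l 1 2 1 v (v + a) := h
    _ = 0 := key' a b

lemma K3 (a : ZMod l) (b : ZMod (Nat.gcd (ZMod.val a) l)) :
    ∑ v ∈ F a b, pcl l 1 (-2) 1 (a - v) v = 0 := by
  have e : ∀ v : ZMod l, pcl l 1 (-2) 1 (a - v) v = - pcl l 1 2 1 v (v - a) := by
    intro v
    rw [show (a - v : ZMod l) = -(v - a) by ring]
    exact L1 v (v - a)
  rw [Finset.sum_congr rfl (fun v _ => e v), Finset.sum_neg_distrib, key a b, neg_zero]

lemma K4 (a : ZMod l) (b : ZMod (Nat.gcd (ZMod.val a) l)) :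
    ∑ v ∈ F a b, pcl l 1 (-2) 1 (-a - v) v = 0 := by
  have e : ∀ v : ZMod l, pcl l 1 (-2) 1 (-a - v) v = - pcl l 1 2 1 v (v + a) := by
    intro v
    rw [show (-a - v : ZMod l) = -(v + a) by ring]
    exact L1 v (v + a)
  rw [Finset.sum_congr rfl (fun v _ => e v), Finset.sum_neg_distrib, key' a b, neg_zero]

end Ks


variable (l) in
noncomputable def AM (u v : ZMod l) : M l := pcl l 1 (-2) 1 (-v) (u+v) - pcl l 1 2 1 v (v-u)
variable (l) in
noncomputable def BM (u v : ZMod l) : M l := pcl l 0 (-1) 1 (-v) (u+v) + pcl l 0 1 1 v (v-u)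
variable (l) in
noncomputable def CM (u v : ZMod l) : M l := pcl l 0 0 1 (-v) (u+v) - pcl l 0 0 1 v (v-u)

section parti
variable [NeZero l]

lemma AM_zero {u v : ZMod l} (h : ¬ copr l u v) : AM l u v = 0 := by
  rw [AM, pcl_zero _ _ _ (fun hc => h ((copr_c1 u v).1 hc)),
    pcl_zero _ _ _ (fun hc => h ((copr_c2 u v).1 hc)), sub_zero]
lemma CM_zero {u v : ZMod l} (h : ¬ copr l u v) : CM l u v = 0 := by
  rw [CM, pcl_zero _ _ _ (fun hc => h ((copr_c1 u v).1 hc)),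
    pcl_zero _ _ _ (fun hc => h ((copr_c2 u v).1 hc)), sub_zero]

lemma pw1 (a : ZMod l) (b : ZMod (Nat.gcd (ZMod.val a) l)) (u v : ZMod l) :
    cx a b u v • AM l u v + cy a b u v • CM l u v =
      (if u = a ∧ castg l a v = b then AM l u v else 0)
    + (if u = -a ∧ castg l a v = -b then AM l u v else 0)
    - (if v = a ∧ castg l a u = -b then CM l u v else 0)
    - (if v = -a ∧ castg l a u = b then CM l u v else 0) := by
  by_cases h : copr l u v
  · rw [cx_of_copr a b h, cy_of_copr a b h,
      ite_one_smul (R := ℂ) _ (AM l u v), ite_one_smul (R := ℂ) _ (AM l u v),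
      ite_one_smul (R := ℂ) _ (CM l u v), ite_one_smul (R := ℂ) _ (CM l u v)]
    module
  · rw [AM_zero h, CM_zero h]
    simp

lemma W1 (a : ZMod l) (b : ZMod (Nat.gcd (ZMod.val a) l)) :
    ∑ v ∈ F a b, AM l a v = 0 := by
  have e : ∀ v : ZMod l, AM l a v = - pcl l 1 2 1 (v + a) v - pcl l 1 2 1 v (v - a) := by
    intro v
    rw [AM, show (a + v : ZMod l) = v + a by ring, L1 (v + a) v]
  rw [Finset.sum_congr rfl (fun v _ => e v), Finset.sum_sub_distrib,
    Finset.sum_neg_distrib, K1 a b, key a b, neg_zero, sub_zero]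

lemma W2 (a : ZMod l) (b : ZMod (Nat.gcd (ZMod.val a) l)) :
    ∑ v ∈ F a b, AM l (-a) v = 0 := by
  have e : ∀ v : ZMod l, AM l (-a) v = - pcl l 1 2 1 (v - a) v - pcl l 1 2 1 v (v + a) := by
    intro v
    rw [AM, show (-a + v : ZMod l) = v - a by ring, show (v - -a : ZMod l) = v + a by ring,
      L1 (v - a) v]
  rw [Finset.sum_congr rfl (fun v _ => e v), Finset.sum_sub_distrib,
    Finset.sum_neg_distrib, K2 a b, key' a b, neg_zero, sub_zero]

lemma castg_nself (a : ZMod l) : castg l a (-a) = 0 := by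
  rw [map_neg, castg_self, neg_zero]

lemma W3 (a : ZMod l) (b : ZMod (Nat.gcd (ZMod.val a) l)) :
    ∑ u ∈ F a b, CM l u a = 0 := by
  have e : ∀ u : ZMod l, CM l u a = y2 l a (-(u + a)) - y2 l a (a - u) := by
    intro u
    rw [CM, pcl001, pcl001, show (a - u : ZMod l) = a - u from rfl]
    congr 1
    rw [← y2_negneg a (-(u+a)), neg_neg]
  have s1 : ∑ u ∈ F a b, y2 l a (-(u + a)) = ∑ u ∈ F a (-b), y2 l a u := by
    calc ∑ u ∈ F a b, y2 l a (-(u + a))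
        = ∑ u ∈ F a b, (fun w => y2 l a (w + -a)) (-u) :=
          Finset.sum_congr rfl (fun u _ => by
            show y2 l a (-(u + a)) = y2 l a (-u + -a)
            rw [show (-(u+a) : ZMod l) = -u + -a by ring])
      _ = ∑ u ∈ F a (-b), y2 l a (u + -a) := by
          exact sum_negidx a b (fun w => y2 l a (w + -a))
      _ = ∑ u ∈ F a (-b), y2 l a u := by
          exact sum_shift a (-b) (-a) (castg_nself a) (fun w => y2 l a w)
  have s2 : ∑ u ∈ F a b, y2 l a (a - u) = ∑ u ∈ F a (-b), y2 l a u := by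
    calc ∑ u ∈ F a b, y2 l a (a - u)
        = ∑ u ∈ F a b, (fun w => y2 l a (w + a)) (-u) :=
          Finset.sum_congr rfl (fun u _ => by
            show y2 l a (a - u) = y2 l a (-u + a)
            rw [show (a - u : ZMod l) = -u + a by ring])
      _ = ∑ u ∈ F a (-b), y2 l a (u + a) := by
          exact sum_negidx a b (fun w => y2 l a (w + a))
      _ = ∑ u ∈ F a (-b), y2 l a u := by
          exact sum_shift a (-b) a (castg_self a) (fun w => y2 l a w)
  rw [Finset.sum_congr rfl (fun u _ => e u), Finset.sum_sub_distrib, s1, s2, sub_self]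

lemma W4 (a : ZMod l) (b : ZMod (Nat.gcd (ZMod.val a) l)) :
    ∑ u ∈ F a b, CM l u (-a) = 0 := by
  have e : ∀ u : ZMod l, CM l u (-a) = y2 l a (u + -a) - y2 l a (a + u) := by
    intro u
    rw [CM, pcl001, pcl001, neg_neg]
    congr 1
    rw [← y2_negneg a (a + u), show (-(a+u) : ZMod l) = -a - u by ring]
  have s1 : ∑ u ∈ F a b, y2 l a (u + -a) = ∑ u ∈ F a b, y2 l a u := by
    exact sum_shift a b (-a) (castg_nself a) (fun w => y2 l a w)
  have s2 : ∑ u ∈ F a b, y2 l a (a + u) = ∑ u ∈ F a b, y2 l a u := by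
    calc ∑ u ∈ F a b, y2 l a (a + u)
        = ∑ u ∈ F a b, (fun w => y2 l a w) (u + a) :=
          Finset.sum_congr rfl (fun u _ => by
            show y2 l a (a + u) = y2 l a (u + a)
            rw [add_comm])
      _ = ∑ u ∈ F a b, y2 l a u := by
          exact sum_shift a b a (castg_self a) (fun w => y2 l a w)
  rw [Finset.sum_congr rfl (fun u _ => e u), Finset.sum_sub_distrib, s1, s2, sub_self]

lemma Wzero (a : ZMod l) (b : ZMod (Nat.gcd (ZMod.val a) l)) :
    ∑ u : ZMod l, ∑ v : ZMod l, (cx a b u v • AM l u v + cy a b u v • CM l u v) = 0 := by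
  rw [Finset.sum_congr rfl (fun u _ => Finset.sum_congr rfl (fun v _ => pw1 a b u v))]
  simp only [Finset.sum_sub_distrib, Finset.sum_add_distrib]
  have t1 : ∑ u : ZMod l, ∑ v : ZMod l, (if u = a ∧ castg l a v = b then AM l u v else 0)
      = ∑ v ∈ F a b, AM l a v := by
    rw [Finset.sum_comm]
    rw [Finset.sum_congr rfl (fun v _ =>
      sum_collapse a (fun _ => castg l a v = b) (fun u => AM l u v))]
    exact sum_filter' _ _
  have t2 : ∑ u : ZMod l, ∑ v : ZMod l, (if u = -a ∧ castg l a v = -b then AM l u v else 0)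
      = ∑ v ∈ F a (-b), AM l (-a) v := by
    rw [Finset.sum_comm]
    rw [Finset.sum_congr rfl (fun v _ =>
      sum_collapse (-a) (fun _ => castg l a v = -b) (fun u => AM l u v))]
    exact sum_filter' _ _
  have t3 : ∑ u : ZMod l, ∑ v : ZMod l, (if v = a ∧ castg l a u = -b then CM l u v else 0)
      = ∑ u ∈ F a (-b), CM l u a := by
    rw [Finset.sum_congr rfl (fun u _ =>
      sum_collapse a (fun _ => castg l a u = -b) (fun v => CM l u v))]
    exact sum_filter' _ _
  have t4 : ∑ u : ZMod l, ∑ v : ZMod l, (if v = -a ∧ castg l a u = b then CM l u v else 0)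
      = ∑ u ∈ F a b, CM l u (-a) := by
    rw [Finset.sum_congr rfl (fun u _ =>
      sum_collapse (-a) (fun _ => castg l a u = b) (fun v => CM l u v))]
    exact sum_filter' _ _
  rw [t1, t2, t3, t4, W1 a b, W2 a (-b), W3 a (-b), W4 a b]
  simp

end parti

section partii
variable [NeZero l]

lemma psiV_PCL (a : ZMod l) (b : ZMod (Nat.gcd (ZMod.val a) l)) (p2 p1 p0 : ℂ) (p q : ZMod l) :
    psiV l a b (PCL l p2 p1 p0 p q) = p2 * cx a b p q + p0 * cy a b p q := by
  rw [PCL, map_add, map_add, map_smul, map_smul, map_smul, psiV_X2, psiV_XY, psiV_Y2]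
  simp [smul_eq_mul]

lemma psiV_AR (a : ZMod l) (b : ZMod (Nat.gcd (ZMod.val a) l)) (u v : ZMod l) :
    psiV l a b (AR l u v) = cx a b (-v) (u+v) + cy a b (-v) (u+v)
      - (cx a b v (v-u) + cy a b v (v-u)) := by
  rw [AR, map_sub, psiV_PCL, psiV_PCL]; ring

lemma psiV_BR (a : ZMod l) (b : ZMod (Nat.gcd (ZMod.val a) l)) (u v : ZMod l) :
    psiV l a b (BR l u v) = cy a b (-v) (u+v) + cy a b v (v-u) := by
  rw [BR, map_add, psiV_PCL, psiV_PCL]; ring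

lemma psiV_CR (a : ZMod l) (b : ZMod (Nat.gcd (ZMod.val a) l)) (u v : ZMod l) :
    psiV l a b (CR l u v) = cy a b (-v) (u+v) - cy a b v (v-u) := by
  rw [CR, map_sub, psiV_PCL, psiV_PCL]; ring

lemma pw2 (a : ZMod l) (b : ZMod (Nat.gcd (ZMod.val a) l)) (u v : ZMod l) :
    psiV l a b (AR l u v) • x2 l u v - (2:ℂ) • psiV l a b (BR l u v) • xy l u v
      + psiV l a b (CR l u v) • y2 l u v =
      (if -v = a ∧ castg l a (u+v) = b then x2 l u v else 0)
    + (if -v = -a ∧ castg l a (u+v) = -b then x2 l u v else 0)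
    - (if v = a ∧ castg l a (v-u) = b then x2 l u v else 0)
    - (if v = -a ∧ castg l a (v-u) = -b then x2 l u v else 0)
    - (if u+v = a ∧ castg l a (-v) = -b then pcl l 1 (-2) 1 u v else 0)
    - (if u+v = -a ∧ castg l a (-v) = b then pcl l 1 (-2) 1 u v else 0)
    + (if v-u = a ∧ castg l a v = -b then pcl l 1 2 1 u v else 0)
    + (if v-u = -a ∧ castg l a v = b then pcl l 1 2 1 u v else 0) := by
  by_cases h : copr l u v
  · rw [psiV_AR, psiV_BR, psiV_CR,
      cx_of_copr a b ((copr_c1 u v).2 h), cy_of_copr a b ((copr_c1 u v).2 h),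
      cx_of_copr a b ((copr_c2 u v).2 h), cy_of_copr a b ((copr_c2 u v).2 h)]
    rw [ite_one_smul (R := ℂ) (-v = a ∧ castg l a (u+v) = b) (x2 l u v),
      ite_one_smul (R := ℂ) (-v = -a ∧ castg l a (u+v) = -b) (x2 l u v),
      ite_one_smul (R := ℂ) (v = a ∧ castg l a (v-u) = b) (x2 l u v),
      ite_one_smul (R := ℂ) (v = -a ∧ castg l a (v-u) = -b) (x2 l u v),
      ite_one_smul (R := ℂ) (u+v = a ∧ castg l a (-v) = -b) (pcl l 1 (-2) 1 u v),
      ite_one_smul (R := ℂ) (u+v = -a ∧ castg l a (-v) = b) (pcl l 1 (-2) 1 u v),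
      ite_one_smul (R := ℂ) (v-u = a ∧ castg l a v = -b) (pcl l 1 2 1 u v),
      ite_one_smul (R := ℂ) (v-u = -a ∧ castg l a v = b) (pcl l 1 2 1 u v)]
    simp only [pcl]
    module
  · rw [x2_zero h, xy_zero h, y2_zero h, pcl_zero _ _ _ h, pcl_zero _ _ _ h]
    simp

lemma castg_negb (a v : ZMod l) (b : ZMod (Nat.gcd (ZMod.val a) l)) :
    (castg l a (-v) = -b) ↔ (castg l a v = b) := by rw [map_neg, neg_inj]
lemma castg_negb' (a v : ZMod l) (b : ZMod (Nat.gcd (ZMod.val a) l)) :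
    (castg l a (-v) = b) ↔ (castg l a v = -b) := by rw [map_neg, neg_eq_iff_eq_neg]

lemma PDVpsi_sum (a : ZMod l) (b : ZMod (Nat.gcd (ZMod.val a) l)) :
    ∑ u : ZMod l, ∑ v : ZMod l,
      (psiV l a b (AR l u v) • x2 l u v - (2:ℂ) • psiV l a b (BR l u v) • xy l u v
        + psiV l a b (CR l u v) • y2 l u v) = 0 := by
  rw [Finset.sum_congr rfl (fun u _ => Finset.sum_congr rfl (fun v _ => pw2 a b u v))]
  simp only [Finset.sum_sub_distrib, Finset.sum_add_distrib]
  have g1 : ∑ u : ZMod l, ∑ v : ZMod l,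
      (if -v = a ∧ castg l a (u+v) = b then x2 l u v else 0) = ∑ u ∈ F a b, x2 l u (-a) := by
    calc ∑ u : ZMod l, ∑ v : ZMod l,
        (if -v = a ∧ castg l a (u+v) = b then x2 l u v else 0)
        = ∑ u : ZMod l, ∑ v : ZMod l,
          (if v = -a ∧ castg l a (u+v) = b then x2 l u v else 0) :=
          Finset.sum_congr rfl (fun u _ => Finset.sum_congr rfl (fun v _ =>
            if_congr (and_congr_left' neg_eq_iff_eq_neg) rfl rfl))
      _ = ∑ u : ZMod l, (if castg l a (u + -a) = b then x2 l u (-a) else 0) :=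
          Finset.sum_congr rfl (fun u _ =>
            sum_collapse (-a) (fun v => castg l a (u+v) = b) (fun v => x2 l u v))
      _ = ∑ u : ZMod l, (if castg l a u = b then x2 l u (-a) else 0) :=
          Finset.sum_congr rfl (fun u _ => if_congr (by rw [castg_nsub]) rfl rfl)
      _ = ∑ u ∈ F a b, x2 l u (-a) := sum_filter' _ _
  have g2 : ∑ u : ZMod l, ∑ v : ZMod l,
      (if -v = -a ∧ castg l a (u+v) = -b then x2 l u v else 0) = ∑ u ∈ F a (-b), x2 l u a := by
    calc ∑ u : ZMod l, ∑ v : ZMod l,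
        (if -v = -a ∧ castg l a (u+v) = -b then x2 l u v else 0)
        = ∑ u : ZMod l, ∑ v : ZMod l,
          (if v = a ∧ castg l a (u+v) = -b then x2 l u v else 0) :=
          Finset.sum_congr rfl (fun u _ => Finset.sum_congr rfl (fun v _ =>
            if_congr (and_congr_left' neg_inj) rfl rfl))
      _ = ∑ u : ZMod l, (if castg l a (u + a) = -b then x2 l u a else 0) :=
          Finset.sum_congr rfl (fun u _ =>
            sum_collapse a (fun v => castg l a (u+v) = -b) (fun v => x2 l u v))
      _ = ∑ u : ZMod l, (if castg l a u = -b then x2 l u a else 0) :=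
          Finset.sum_congr rfl (fun u _ => if_congr (by rw [castg_addr]) rfl rfl)
      _ = ∑ u ∈ F a (-b), x2 l u a := sum_filter' _ _
  have g3 : ∑ u : ZMod l, ∑ v : ZMod l,
      (if v = a ∧ castg l a (v-u) = b then x2 l u v else 0) = ∑ u ∈ F a (-b), x2 l u a := by
    calc ∑ u : ZMod l, ∑ v : ZMod l,
        (if v = a ∧ castg l a (v-u) = b then x2 l u v else 0)
        = ∑ u : ZMod l, (if castg l a (a - u) = b then x2 l u a else 0) :=
          Finset.sum_congr rfl (fun u _ =>
            sum_collapse a (fun v => castg l a (v-u) = b) (fun v => x2 l u v))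
      _ = ∑ u : ZMod l, (if castg l a u = -b then x2 l u a else 0) :=
          Finset.sum_congr rfl (fun u _ =>
            if_congr (by rw [castg_subl, neg_eq_iff_eq_neg]) rfl rfl)
      _ = ∑ u ∈ F a (-b), x2 l u a := sum_filter' _ _
  have g4 : ∑ u : ZMod l, ∑ v : ZMod l,
      (if v = -a ∧ castg l a (v-u) = -b then x2 l u v else 0) = ∑ u ∈ F a b, x2 l u (-a) := by
    calc ∑ u : ZMod l, ∑ v : ZMod l,
        (if v = -a ∧ castg l a (v-u) = -b then x2 l u v else 0)
        = ∑ u : ZMod l, (if castg l a (-a - u) = -b then x2 l u (-a) else 0) :=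
          Finset.sum_congr rfl (fun u _ =>
            sum_collapse (-a) (fun v => castg l a (v-u) = -b) (fun v => x2 l u v))
      _ = ∑ u : ZMod l, (if castg l a u = b then x2 l u (-a) else 0) :=
          Finset.sum_congr rfl (fun u _ =>
            if_congr (by rw [castg_nsubl, neg_inj]) rfl rfl)
      _ = ∑ u ∈ F a b, x2 l u (-a) := sum_filter' _ _
  have g5 : ∑ u : ZMod l, ∑ v : ZMod l,
      (if u+v = a ∧ castg l a (-v) = -b then pcl l 1 (-2) 1 u v else 0) = 0 := by
    rw [Finset.sum_comm]
    calc ∑ v : ZMod l, ∑ u : ZMod l,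
        (if u+v = a ∧ castg l a (-v) = -b then pcl l 1 (-2) 1 u v else 0)
        = ∑ v : ZMod l, ∑ u : ZMod l,
          (if u = a - v ∧ castg l a (-v) = -b then pcl l 1 (-2) 1 u v else 0) :=
          Finset.sum_congr rfl (fun v _ => Finset.sum_congr rfl (fun u _ =>
            if_congr (and_congr_left' (cond_add u v a)) rfl rfl))
      _ = ∑ v : ZMod l, (if castg l a (-v) = -b then pcl l 1 (-2) 1 (a - v) v else 0) :=
          Finset.sum_congr rfl (fun v _ =>
            sum_collapse (a - v) (fun _ => castg l a (-v) = -b) (fun u => pcl l 1 (-2) 1 u v))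
      _ = ∑ v : ZMod l, (if castg l a v = b then pcl l 1 (-2) 1 (a - v) v else 0) :=
          Finset.sum_congr rfl (fun v _ => if_congr (castg_negb a v b) rfl rfl)
      _ = ∑ v ∈ F a b, pcl l 1 (-2) 1 (a - v) v := sum_filter' _ _
      _ = 0 := K3 a b
  have g6 : ∑ u : ZMod l, ∑ v : ZMod l,
      (if u+v = -a ∧ castg l a (-v) = b then pcl l 1 (-2) 1 u v else 0) = 0 := by
    rw [Finset.sum_comm]
    calc ∑ v : ZMod l, ∑ u : ZMod l,
        (if u+v = -a ∧ castg l a (-v) = b then pcl l 1 (-2) 1 u v else 0)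
        = ∑ v : ZMod l, ∑ u : ZMod l,
          (if u = -a - v ∧ castg l a (-v) = b then pcl l 1 (-2) 1 u v else 0) :=
          Finset.sum_congr rfl (fun v _ => Finset.sum_congr rfl (fun u _ =>
            if_congr (and_congr_left' (cond_addneg u v a)) rfl rfl))
      _ = ∑ v : ZMod l, (if castg l a (-v) = b then pcl l 1 (-2) 1 (-a - v) v else 0) :=
          Finset.sum_congr rfl (fun v _ =>
            sum_collapse (-a - v) (fun _ => castg l a (-v) = b) (fun u => pcl l 1 (-2) 1 u v))
      _ = ∑ v : ZMod l, (if castg l a v = -b then pcl l 1 (-2) 1 (-a - v) v else 0) :=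
          Finset.sum_congr rfl (fun v _ => if_congr (castg_negb' a v b) rfl rfl)
      _ = ∑ v ∈ F a (-b), pcl l 1 (-2) 1 (-a - v) v := sum_filter' _ _
      _ = 0 := K4 a (-b)
  have g7 : ∑ u : ZMod l, ∑ v : ZMod l,
      (if v-u = a ∧ castg l a v = -b then pcl l 1 2 1 u v else 0) = 0 := by
    rw [Finset.sum_comm]
    calc ∑ v : ZMod l, ∑ u : ZMod l,
        (if v-u = a ∧ castg l a v = -b then pcl l 1 2 1 u v else 0)
        = ∑ v : ZMod l, ∑ u : ZMod l,
          (if u = v - a ∧ castg l a v = -b then pcl l 1 2 1 u v else 0) :=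
          Finset.sum_congr rfl (fun v _ => Finset.sum_congr rfl (fun u _ =>
            if_congr (and_congr_left' (cond_sub u v a)) rfl rfl))
      _ = ∑ v : ZMod l, (if castg l a v = -b then pcl l 1 2 1 (v - a) v else 0) :=
          Finset.sum_congr rfl (fun v _ =>
            sum_collapse (v - a) (fun _ => castg l a v = -b) (fun u => pcl l 1 2 1 u v))
      _ = ∑ v ∈ F a (-b), pcl l 1 2 1 (v - a) v := sum_filter' _ _
      _ = 0 := K2 a (-b)
  have g8 : ∑ u : ZMod l, ∑ v : ZMod l,
      (if v-u = -a ∧ castg l a v = b then pcl l 1 2 1 u v else 0) = 0 := by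
    rw [Finset.sum_comm]
    calc ∑ v : ZMod l, ∑ u : ZMod l,
        (if v-u = -a ∧ castg l a v = b then pcl l 1 2 1 u v else 0)
        = ∑ v : ZMod l, ∑ u : ZMod l,
          (if u = v + a ∧ castg l a v = b then pcl l 1 2 1 u v else 0) :=
          Finset.sum_congr rfl (fun v _ => Finset.sum_congr rfl (fun u _ =>
            if_congr (and_congr_left' (cond_subneg u v a)) rfl rfl))
      _ = ∑ v : ZMod l, (if castg l a v = b then pcl l 1 2 1 (v + a) v else 0) :=
          Finset.sum_congr rfl (fun v _ =>
            sum_collapse (v + a) (fun _ => castg l a v = b) (fun u => pcl l 1 2 1 u v))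
      _ = ∑ v ∈ F a b, pcl l 1 2 1 (v + a) v := sum_filter' _ _
      _ = 0 := K1 a b
  rw [g1, g2, g3, g4, g5, g6, g7, g8]
  abel

end partii

variable {l : ℕ}
section glue
variable [NeZero l]

variable (l) in
noncomputable def W0 (φ : Module.Dual ℂ (M l)) : V l :=
  (24:ℂ)⁻¹ • ∑ u : ZMod l, ∑ v : ZMod l,
    (φ (AM l u v) • X2 l u v + (-(2:ℂ) * φ (BM l u v)) • XY l u v + φ (CM l u v) • Y2 l u v)

lemma mkQ_W0 (φ : Module.Dual ℂ (M l)) : (Rel l).mkQ (W0 l φ) = PD l φ := by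
  rw [W0, PD, map_smul, map_sum]
  congr 1
  refine Finset.sum_congr rfl (fun u _ => ?_)
  rw [map_sum]
  refine Finset.sum_congr rfl (fun v _ => ?_)
  rw [map_add, map_add, map_smul, map_smul, map_smul, mkQ_X2, mkQ_XY, mkQ_Y2, AM, BM, CM]
  module

lemma psiV_W0_zero (φ : Module.Dual ℂ (M l)) (a : ZMod l)
    (b : ZMod (Nat.gcd (ZMod.val a) l)) : psiV l a b (W0 l φ) = 0 := by
  rw [W0, map_smul, map_sum]
  have e : ∀ u : ZMod l, psiV l a b
        (∑ v : ZMod l, (φ (AM l u v) • X2 l u v + (-(2:ℂ) * φ (BM l u v)) • XY l u v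
          + φ (CM l u v) • Y2 l u v))
      = ∑ v : ZMod l, φ (cx a b u v • AM l u v + cy a b u v • CM l u v) := by
    intro u
    rw [map_sum]
    refine Finset.sum_congr rfl (fun v _ => ?_)
    rw [map_add, map_add, map_smul, map_smul, map_smul, psiV_X2, psiV_XY, psiV_Y2,
      map_add, map_smul, map_smul]
    simp only [smul_eq_mul]
    ring
  rw [Finset.sum_congr rfl (fun u _ => e u)]
  have e2 : ∑ u : ZMod l, ∑ v : ZMod l, φ (cx a b u v • AM l u v + cy a b u v • CM l u v)
      = φ (∑ u : ZMod l, ∑ v : ZMod l, (cx a b u v • AM l u v + cy a b u v • CM l u v)) := by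
    rw [map_sum]
    exact Finset.sum_congr rfl (fun u _ => (map_sum φ _ Finset.univ).symm)
  rw [e2, Wzero a b, map_zero, smul_zero]

theorem part1 (φ : Module.Dual ℂ (M l)) : PD l φ ∈ S l := by
  rw [S, Submodule.mem_map]
  refine ⟨W0 l φ, ?_, mkQ_W0 φ⟩
  simp only [Submodule.mem_iInf, LinearMap.mem_ker]
  intro a b _
  exact psiV_W0_zero φ a b

variable (l) in
noncomputable def PDW (f : Module.Dual ℂ (V l)) : M l :=
  (24:ℂ)⁻¹ • ∑ u : ZMod l, ∑ v : ZMod l,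
    (f (AR l u v) • x2 l u v - (2:ℂ) • f (BR l u v) • xy l u v + f (CR l u v) • y2 l u v)

lemma PDW_psi (a : ZMod l) (b : ZMod (Nat.gcd (ZMod.val a) l)) :
    PDW l (psiV l a b) = 0 := by
  rw [PDW, PDVpsi_sum, smul_zero]

lemma PDW_zero : PDW l 0 = 0 := by
  rw [PDW]
  simp

lemma PDW_add (f g : Module.Dual ℂ (V l)) : PDW l (f + g) = PDW l f + PDW l g := by
  rw [PDW, PDW, PDW, ← smul_add]
  congr 1
  rw [← Finset.sum_add_distrib]
  refine Finset.sum_congr rfl (fun u _ => ?_)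
  rw [← Finset.sum_add_distrib]
  refine Finset.sum_congr rfl (fun v _ => ?_)
  simp only [LinearMap.add_apply]
  module

lemma PDW_smul (c : ℂ) (f : Module.Dual ℂ (V l)) : PDW l (c • f) = c • PDW l f := by
  rw [PDW, PDW, smul_comm]
  congr 1
  rw [Finset.smul_sum]
  refine Finset.sum_congr rfl (fun u _ => ?_)
  rw [Finset.smul_sum]
  refine Finset.sum_congr rfl (fun v _ => ?_)
  simp only [LinearMap.smul_apply, smul_eq_mul]
  module

lemma PD_eq_PDW (φ : Module.Dual ℂ (M l)) : PD l φ = PDW l (φ.comp (Rel l).mkQ) := by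
  rw [PD, PDW]
  congr 1

theorem part2 (φ : Module.Dual ℂ (M l)) (hS : ∀ m ∈ S l, φ m = 0) : PD l φ = 0 := by
  classical
  set L : (Σ a : ZMod l, {b : ZMod (Nat.gcd (ZMod.val a) l) // IsUnit b}) →
      Module.Dual ℂ (V l) := fun i => psiV l i.1 i.2.1 with hL
  have hker : ⨅ i, LinearMap.ker (L i) ≤ LinearMap.ker (φ.comp (Rel l).mkQ) := by
    intro x hx
    rw [LinearMap.mem_ker, LinearMap.comp_apply]
    apply hS
    rw [S, Submodule.mem_map]
    refine ⟨x, ?_, rfl⟩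
    simp only [Submodule.mem_iInf, LinearMap.mem_ker]
    intro a b hb
    exact (Submodule.mem_iInf _).1 hx ⟨a, b, hb⟩
  have hspan : φ.comp (Rel l).mkQ ∈ Submodule.span ℂ (Set.range L) :=
    mem_span_of_iInf_ker_le_ker hker
  have h0 : ∀ g ∈ Submodule.span ℂ (Set.range L), PDW l g = 0 := by
    intro g hg
    induction hg using Submodule.span_induction with
    | mem g hg => obtain ⟨i, rfl⟩ := hg; exact PDW_psi i.1 i.2.1
    | zero => exact PDW_zero
    | add f g _ _ hf hg => rw [PDW_add, hf, hg, add_zero]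
    | smul c f _ hf => rw [PDW_smul, hf, smul_zero]
  rw [PD_eq_PDW]
  exact h0 _ hspan

end glue


end MW

open MW in
theorem stmt5 (l : ℕ) (hl : 1 < l) [NeZero l] (φ : Module.Dual ℂ (M l)) :
    PD l φ ∈ S l ∧ ((∀ m ∈ S l, φ m = 0) → PD l φ = 0) :=
  ⟨part1 φ, fun h => part2 φ h⟩
end

section
/- For every integer l > 1 and all integers a, b, c, d with gcd(c,d,l) = 1, the following identity holds in M₄(l), where symbols are indexed by the residues of the indicated integers modulo l: ((−ad−bc+ac+bd)·x² + (ad+bc−2bd)·xy + bd·y²)(c−d,d)_− + (ac·x² + (ad+bc−2ac)·xy + (−ad−bc+ac+bd)·y²)(−c,c−d)_− = (ac·x² + (ad+bc)·xy + bd·y²)(c,d)_−. -/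
/-!
Before symmetrising, the identity already holds in `M₄(l)`, even with `a, b, c, d` in the
coefficients replaced by arbitrary complex numbers: the difference of the two sides is a
combination of the two-term relations at `(c, d)` and the three-term relations at `(c - d, d)`,
`(-c, c - d)` and `(d, -c)`, one orbit of the rotation `(u, v) ↦ (v, -u - v)`. These pairs are
coprime to `l` because they arise from `(c, d)` by unimodular changes. Minus-symmetrisation is
linear, so the identity survives it.
-/

open scoped BigOperators

namespace MW

variable (l : ℕ)

/-- The linear map on `V l` underlying the involution `i`:
`x²(u,v) ↦ x²(-u,v)`, `xy(u,v) ↦ -xy(-u,v)`, `y²(u,v) ↦ y²(-u,v)`. -/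
noncomputable def iV : V l →ₗ[ℂ] V l :=
  Finsupp.lift (V l) ℂ (Sym l) fun p =>
    if p.1 = 1 then -(Finsupp.single (1, -p.2.1, p.2.2) (1 : ℂ))
    else Finsupp.single (p.1, -p.2.1, p.2.2) (1 : ℂ)

end MW

namespace MW

variable (l : ℕ)

lemma intCast_dvd_of_dvd_val [NeZero l] {g : ℕ} (hg : g ∣ l) (m : ℤ) (hm : g ∣ (m : ZMod l).val) :
    (g : ℤ) ∣ m := by
  rw [← ZMod.intCast_zmod_eq_zero_iff_dvd, ← ZMod.cast_intCast hg, ← ZMod.natCast_val,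
    ZMod.natCast_eq_zero_iff]
  exact hm

lemma copr_intCast [NeZero l] (m n : ℤ) (h : Nat.gcd (Int.gcd m n) l = 1) :
    copr l (m : ZMod l) (n : ZMod l) := by
  set g := Nat.gcd (Nat.gcd (m : ZMod l).val (n : ZMod l).val) l
  have hgl : g ∣ l := Nat.gcd_dvd_right _ _
  have hgm := intCast_dvd_of_dvd_val l hgl m ((Nat.gcd_dvd_left _ _).trans (Nat.gcd_dvd_left _ _))
  have hgn := intCast_dvd_of_dvd_val l hgl n ((Nat.gcd_dvd_left _ _).trans (Nat.gcd_dvd_right _ _))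
  have hg : g ∣ Nat.gcd (Int.gcd m n) l :=
    Nat.dvd_gcd (Int.natCast_dvd_natCast.mp (Int.dvd_coe_gcd hgm hgn)) hgl
  rw [h] at hg
  exact Nat.dvd_one.mp hg

variable {l}

lemma mk_eq_zero_of_copr {u v : ZMod l} (huv : copr l u v) {w : V l}
    (hw : w = X2 l u v + Y2 l v (-u) ∨ w = XY l u v - XY l v (-u) ∨ w = Y2 l u v + X2 l v (-u) ∨
      w = XY l v (-u - v) - XY l (-u - v) u + Y2 l (-u - v) u + X2 l u v - XY l u v) :
    Submodule.Quotient.mk (p := Rel l) w = 0 :=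
  (Submodule.Quotient.mk_eq_zero _).2 (Submodule.subset_span (Or.inr ⟨u, v, huv, hw⟩))

lemma x2_add_y2 {u v : ZMod l} (h : copr l u v) : x2 l u v + y2 l v (-u) = 0 :=
  mk_eq_zero_of_copr h (Or.inl rfl)

lemma xy_sub_xy {u v : ZMod l} (h : copr l u v) : xy l u v - xy l v (-u) = 0 :=
  mk_eq_zero_of_copr h (Or.inr (Or.inl rfl))

lemma y2_add_x2 {u v : ZMod l} (h : copr l u v) : y2 l u v + x2 l v (-u) = 0 :=
  mk_eq_zero_of_copr h (Or.inr (Or.inr (Or.inl rfl)))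

lemma three_term_relation {u v : ZMod l} (h : copr l u v) :
    xy l v (-u - v) - xy l (-u - v) u + y2 l (-u - v) u + x2 l u v - xy l u v = 0 :=
  mk_eq_zero_of_copr h (Or.inr (Or.inr (Or.inr rfl)))

lemma pcl_sub_add_pcl_neg {u v : ZMod l} (huv : copr l u v) (h₁ : copr l (u - v) v)
    (h₂ : copr l (-u) (u - v)) (h₃ : copr l v (-u)) (a b c d : ℂ) :
    pcl l (-(a*d) - b*c + a*c + b*d) (a*d + b*c - 2*(b*d)) (b*d) (u - v) v +
      pcl l (a*c) (a*d + b*c - 2*(a*c)) (-(a*d) - b*c + a*c + b*d) (-u) (u - v) =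
    pcl l (a*c) (a*d + b*c) (b*d) u v := by
  have r₁ := three_term_relation h₁
  have r₂ := three_term_relation h₂
  have r₃ := three_term_relation h₃
  rw [show -(u - v) - v = -u by ring] at r₁
  rw [show -(-u) - (u - v) = v by ring] at r₂
  rw [show -v - -u = u - v by ring] at r₃
  simp only [pcl]
  linear_combination (norm := module) ((a - b) * (c - d)) • r₁ + (a*c) • r₂ + (b*d) • r₃ -
    (a*c) • x2_add_y2 huv - (a*d + b*c) • xy_sub_xy huv - (b*d) • y2_add_x2 huv

end MW

open MW in
theorem stmt17 (l : ℕ) (hl : 1 < l)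
    (hi : Rel l ≤ (Rel l).comap (iV l))
    (a b c d : ℤ) (h : Nat.gcd (Int.gcd c d) l = 1) :
    (2 : ℂ)⁻¹ • (pcl l ((-(a*d) - b*c + a*c + b*d : ℤ) : ℂ) ((a*d + b*c - 2*(b*d) : ℤ) : ℂ)
          ((b*d : ℤ) : ℂ) ((c : ZMod l) - (d : ZMod l)) ((d : ZMod l))
        - Submodule.mapQ (Rel l) (Rel l) (iV l) hi
          (pcl l ((-(a*d) - b*c + a*c + b*d : ℤ) : ℂ) ((a*d + b*c - 2*(b*d) : ℤ) : ℂ)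
            ((b*d : ℤ) : ℂ) ((c : ZMod l) - (d : ZMod l)) ((d : ZMod l)))) +
    (2 : ℂ)⁻¹ • (pcl l ((a*c : ℤ) : ℂ) ((a*d + b*c - 2*(a*c) : ℤ) : ℂ)
          ((-(a*d) - b*c + a*c + b*d : ℤ) : ℂ) (-(c : ZMod l)) ((c : ZMod l) - (d : ZMod l))
        - Submodule.mapQ (Rel l) (Rel l) (iV l) hi
          (pcl l ((a*c : ℤ) : ℂ) ((a*d + b*c - 2*(a*c) : ℤ) : ℂ)
            ((-(a*d) - b*c + a*c + b*d : ℤ) : ℂ) (-(c : ZMod l)) ((c : ZMod l) - (d : ZMod l)))) =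
    (2 : ℂ)⁻¹ • (pcl l ((a*c : ℤ) : ℂ) ((a*d + b*c : ℤ) : ℂ) ((b*d : ℤ) : ℂ)
          ((c : ZMod l)) ((d : ZMod l))
        - Submodule.mapQ (Rel l) (Rel l) (iV l) hi
          (pcl l ((a*c : ℤ) : ℂ) ((a*d + b*c : ℤ) : ℂ) ((b*d : ℤ) : ℂ)
            ((c : ZMod l)) ((d : ZMod l)))) := by
  have : NeZero l := ⟨by omega⟩
  have h₁ : copr l ((c - d : ℤ) : ZMod l) (d : ZMod l) :=
    copr_intCast l _ _ (by rwa [Int.gcd_sub_self_left])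
  have h₂ : copr l ((-c : ℤ) : ZMod l) ((c - d : ℤ) : ZMod l) :=
    copr_intCast l _ _ (by simpa using h)
  have h₃ : copr l (d : ZMod l) ((-c : ℤ) : ZMod l) :=
    copr_intCast l _ _ (by rwa [Int.gcd_neg, Int.gcd_comm])
  push_cast at h₁ h₂ h₃ ⊢
  rw [← pcl_sub_add_pcl_neg (copr_intCast l c d h) h₁ h₂ h₃, map_add]
  module
end
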